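/- Let α ≥ 2 be an integer, μ a nonzero complex number, and t(z), s(z) monic complex polynomials of degree α satisfying t'(z)·s(z) − t(z)·s'(z) = α·μ·z^(α−1) for all z. Then there exist complex constants ω₀, σ₀ with σ₀ − ω₀ = μ such that t(z) = z^α + ω₀ and s(z) = z^α + σ₀. -/

import Mathlib

/-!
Put `u = s - t`. The hypothesis says that the Wronskian `W(u, t) = u t' - u' t` equals
`α μ X^(α-1)`. Since `deg u < deg t = α`, the coefficient of `W(u, t)` in degree
`α + deg u - 1` is `(α - deg u) · lc u ≠ 0`, so `deg W(u, t) = α + deg u - 1`, which forces `u`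
to be a constant `c`. Then `W(u, t) = c t'`; leading coefficients give `c = μ`, hence
`t' = α X^(α-1)` and `t - X^α` is constant.
-/

open Polynomial

namespace Polynomial

section CommRing

variable {R : Type*} [CommRing R]

theorem coeff_mul_derivative_natDegree_add_sub_one (a b : R[X]) :
    (a * derivative b).coeff (a.natDegree + b.natDegree - 1) =
      b.natDegree * a.leadingCoeff * b.leadingCoeff := by
  rcases hb : b.natDegree with _ | k
  · rw [eq_C_of_natDegree_eq_zero hb, derivative_C]
    simp
  · rw [← add_assoc, Nat.add_sub_cancel, coeff_mul_add_eq_of_natDegree_le le_rfl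
        ((natDegree_derivative_le b).trans (by omega)), coeff_derivative, leadingCoeff,
        leadingCoeff, hb]
    push_cast
    ring

theorem coeff_wronskian_natDegree_add_sub_one (a b : R[X]) :
    (wronskian a b).coeff (a.natDegree + b.natDegree - 1) =
      (b.natDegree - a.natDegree : R) * a.leadingCoeff * b.leadingCoeff := by
  rw [wronskian, coeff_sub, coeff_mul_derivative_natDegree_add_sub_one, mul_comm (derivative a),
    add_comm a.natDegree, coeff_mul_derivative_natDegree_add_sub_one]
  ring

end CommRing

section CharZero

variable {R : Type*} [CommRing R] [IsDomain R] [CharZero R]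

theorem natDegree_wronskian {a b : R[X]} (ha : a ≠ 0) (hb : b ≠ 0)
    (hab : a.natDegree ≠ b.natDegree) :
    (wronskian a b).natDegree = a.natDegree + b.natDegree - 1 := by
  have hc : (wronskian a b).coeff (a.natDegree + b.natDegree - 1) ≠ 0 := by
    rw [coeff_wronskian_natDegree_add_sub_one]
    refine mul_ne_zero (mul_ne_zero ?_ (leadingCoeff_ne_zero.mpr ha)) (leadingCoeff_ne_zero.mpr hb)
    exact sub_ne_zero.mpr (Nat.cast_injective.ne (Ne.symm hab))
  exact le_antisymm
    (Nat.le_sub_one_of_lt (natDegree_wronskian_lt_add fun h0 => hc (by rw [h0, coeff_zero])))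
    (le_natDegree_of_ne_zero hc)

theorem natDegree_eq_zero_of_natDegree_wronskian_lt {a b : R[X]}
    (hab : a.natDegree < b.natDegree) (hw : (wronskian a b).natDegree < b.natDegree) :
    a.natDegree = 0 := by
  rcases eq_or_ne a 0 with rfl | ha
  · exact natDegree_zero
  · rw [natDegree_wronskian ha (ne_zero_of_natDegree_gt hab) hab.ne] at hw
    omega

theorem exists_eq_X_pow_add_C_of_derivative_eq {p : R[X]} {n : ℕ}
    (h : derivative p = C (n : R) * X ^ (n - 1)) : ∃ c, p = X ^ n + C c := by
  have h0 : derivative (p - X ^ n) = 0 := by rw [derivative_sub, derivative_X_pow, h, sub_self]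
  exact ⟨_, eq_add_of_sub_eq' (eq_C_of_derivative_eq_zero h0)⟩

end CharZero

end Polynomial

theorem stmt_1 (α : ℕ) (hα : 2 ≤ α) (μ : ℂ) (hμ : μ ≠ 0)
    (t s : Polynomial ℂ) (hmt : t.Monic) (hms : s.Monic)
    (hdt : t.natDegree = α) (hds : s.natDegree = α)
    (h : ∀ z : ℂ,
      (Polynomial.derivative t).eval z * s.eval z
        - t.eval z * (Polynomial.derivative s).eval z = (α : ℂ) * μ * z ^ (α - 1)) :
    ∃ ω₀ σ₀ : ℂ, σ₀ - ω₀ = μ ∧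
      (∀ z : ℂ, t.eval z = z ^ α + ω₀) ∧ (∀ z : ℂ, s.eval z = z ^ α + σ₀) := by
  have hα0 : (α : ℂ) ≠ 0 := Nat.cast_ne_zero.mpr (by omega)
  have hw : wronskian (s - t) t = C ((α : ℂ) * μ) * X ^ (α - 1) := by
    refine Polynomial.funext fun z => ?_
    simp only [wronskian, eval_sub, eval_mul, eval_C, eval_pow, eval_X, derivative_sub]
    linear_combination h z
  have hlt : (s - t).natDegree < t.natDegree :=
    hdt ▸ IsMonicOfDegree.natDegree_sub_lt (by omega) ⟨hds, hms⟩ ⟨hdt, hmt⟩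
  obtain ⟨c, hc⟩ : ∃ c, s - t = C c :=
    ⟨_, eq_C_of_natDegree_eq_zero (natDegree_eq_zero_of_natDegree_wronskian_lt hlt
      (by rw [hw, natDegree_C_mul_X_pow _ _ (mul_ne_zero hα0 hμ)]; omega))⟩
  rw [hc] at hw
  simp only [wronskian, derivative_C, zero_mul, sub_zero] at hw
  have hcμ : c = μ := by
    have := congrArg leadingCoeff hw
    rw [leadingCoeff_mul, leadingCoeff_C, leadingCoeff_derivative, hmt.leadingCoeff, hdt,
      leadingCoeff_C_mul_X_pow] at this
    exact mul_right_cancel₀ hα0 (by linear_combination this)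
  subst c
  have hderiv : derivative t = C (α : ℂ) * X ^ (α - 1) :=
    mul_left_cancel₀ (C_ne_zero.mpr hμ) (by rw [hw, C_mul]; ring)
  obtain ⟨ω₀, rfl⟩ := exists_eq_X_pow_add_C_of_derivative_eq hderiv
  refine ⟨ω₀, ω₀ + μ, add_sub_cancel_left ω₀ μ, fun z => by simp, fun z => ?_⟩
  rw [eq_add_of_sub_eq' hc]
  simp [add_assoc]
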